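/- Let L̂₁ be a symmetric real matrix, invertible, with exactly one positive eigenvalue (counted with multiplicity) whose eigenvector ψ̂ satisfies ⟨ψ̂, û⟩ ≠ 0 for a given nonzero vector û. If ⟨L̂₁^{-1}û, û⟩ > 0, then the constrained operator 𝓛̂ on û^⊥ (defined by 𝓛̂Ψ̂ = L̂₁Ψ̂ - (⟨L̂₁Ψ̂, û⟩/⟨û,û⟩)û) has all eigenvalues negative; if ⟨L̂₁^{-1}û, û⟩ < 0, then 𝓛̂ has a positive eigenvalue on û^⊥. -/

import Mathlib

/-!
Expand everything in the eigenbasis `ψ k` of `L̂₁` and write `c k = ⟨ψ k, û⟩`. If `(Λ, Ψ)` is a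
constrained eigenpair, `L̂₁ Ψ - μ û = Λ Ψ`, then `(λ k - Λ) ⟨ψ k, Ψ⟩ = μ c k`. For `Λ ≥ 0` a zero
multiplier `μ` forces `Ψ ∥ ψ̂`, which is not orthogonal to `û`; otherwise `Ψ` is a multiple of
`(L̂₁ - Λ)⁻¹ û`, and `Ψ ⊥ û` is the secular equation `Q(Λ) = ∑ c k ² / (λ k - Λ) = 0`.
Every term of `Q` increases on `[0, λ₁)` and `Q < 0` on `(λ₁, ∞)`, so `Q(0) > 0` leaves no root
with `Λ ≥ 0`. If `Q(0) < 0`, the pole of `Q` at `λ₁` gives a root in `(0, λ₁)` by the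
intermediate value theorem, and `(L̂₁ - Λ)⁻¹ û` is then an eigenvector for it.
-/

open Matrix Finset

section Eigenbasis

variable {m : Type*} [Fintype m] {ψ : m → m → ℝ}

theorem sum_smul_dotProduct (ψ : m → m → ℝ) (a x : m → ℝ) :
    (∑ k, a k • ψ k) ⬝ᵥ x = ∑ k, a k * (ψ k ⬝ᵥ x) := by
  simp only [sum_dotProduct, smul_dotProduct, smul_eq_mul]

section Eigen

variable {L : Matrix m m ℝ} {lam : m → ℝ}

theorem mulVec_sum_smul_of_eigen (heig : ∀ k, L *ᵥ ψ k = lam k • ψ k) (a : m → ℝ) :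
    L *ᵥ ∑ k, a k • ψ k = ∑ k, (lam k * a k) • ψ k := by
  simp only [mulVec_sum, mulVec_smul, heig, smul_smul, mul_comm]

theorem dotProduct_mulVec_of_eigen (hL : L.IsSymm) (heig : ∀ k, L *ᵥ ψ k = lam k • ψ k)
    (j : m) (y : m → ℝ) : ψ j ⬝ᵥ (L *ᵥ y) = lam j * (ψ j ⬝ᵥ y) := by
  rw [dotProduct_mulVec, ← mulVec_transpose, hL.eq, heig j, smul_dotProduct, smul_eq_mul]

end Eigen

variable [DecidableEq m]

theorem dotProduct_sum_smul_of_orthonormal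
    (hψ : ∀ j k, ψ j ⬝ᵥ ψ k = if j = k then 1 else 0) (a : m → ℝ) (j : m) :
    ψ j ⬝ᵥ ∑ k, a k • ψ k = a j := by
  simp [dotProduct_sum, dotProduct_smul, hψ]

theorem sum_dotProduct_smul_of_orthonormal
    (hψ : ∀ j k, ψ j ⬝ᵥ ψ k = if j = k then 1 else 0) (x : m → ℝ) :
    ∑ k, (ψ k ⬝ᵥ x) • ψ k = x := by
  have hrows : of ψ * (of ψ)ᵀ = 1 := by
    ext j k
    simpa [mul_apply, one_apply, dotProduct] using hψ j k
  have hexpand : ∑ k, (ψ k ⬝ᵥ x) • ψ k = (of ψ)ᵀ *ᵥ (of ψ *ᵥ x) := by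
    funext i
    simp [mulVec, dotProduct, Finset.sum_apply, mul_comm]
  rw [hexpand, mulVec_mulVec, mul_eq_one_comm.mp hrows, one_mulVec]

end Eigenbasis

section Secular

variable {m : Type*} [Fintype m]

noncomputable def secular (lam c : m → ℝ) (Λ : ℝ) : ℝ :=
  ∑ k, c k ^ 2 / (lam k - Λ)

theorem continuousOn_secular {lam : m → ℝ} (c : m → ℝ) {s : Set ℝ}
    (hs : ∀ Λ ∈ s, ∀ k, lam k ≠ Λ) : ContinuousOn (secular lam c) s :=
  continuousOn_finsetSum _ fun k _ =>
    continuousOn_const.div (continuousOn_const.sub continuousOn_id)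
      fun Λ hΛ => sub_ne_zero.mpr (hs Λ hΛ k)

theorem sq_div_le_sq_div_sub_of_neg {l Λ : ℝ} (c : ℝ) (hl : l < 0) (hΛ : 0 ≤ Λ) :
    c ^ 2 / l ≤ c ^ 2 / (l - Λ) := by
  rw [div_eq_mul_one_div, div_eq_mul_one_div (c ^ 2)]
  exact mul_le_mul_of_nonneg_left (one_div_le_one_div_of_neg_of_le hl (by linarith))
    (sq_nonneg c)

variable {lam : m → ℝ} {i₀ : m} [DecidableEq m]

theorem secular_zero_eq (c : m → ℝ) :
    secular lam c 0 = c i₀ ^ 2 / lam i₀ + ∑ k ∈ univ.erase i₀, c k ^ 2 / lam k := by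
  simp only [secular, sub_zero]
  exact (add_sum_erase _ _ (mem_univ i₀)).symm

theorem le_secular (hrest : ∀ k, k ≠ i₀ → lam k < 0) (c : m → ℝ) {Λ : ℝ} (hΛ : 0 ≤ Λ) :
    c i₀ ^ 2 / (lam i₀ - Λ) + ∑ k ∈ univ.erase i₀, c k ^ 2 / lam k ≤ secular lam c Λ := by
  rw [secular, ← add_sum_erase _ _ (mem_univ i₀)]
  exact add_le_add le_rfl (sum_le_sum fun k hk =>
    sq_div_le_sq_div_sub_of_neg _ (hrest k (ne_of_mem_erase hk)) hΛ)

theorem secular_zero_le (hrest : ∀ k, k ≠ i₀ → lam k < 0) (c : m → ℝ) {Λ : ℝ}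
    (hΛ : 0 ≤ Λ) (hΛi₀ : Λ < lam i₀) : secular lam c 0 ≤ secular lam c Λ := by
  rw [secular_zero_eq (i₀ := i₀)]
  refine le_trans (add_le_add ?_ le_rfl) (le_secular hrest c hΛ)
  exact div_le_div_of_nonneg_left (sq_nonneg _) (by linarith) (by linarith)

theorem secular_neg_of_gt (hpos : 0 < lam i₀) (hrest : ∀ k, k ≠ i₀ → lam k < 0)
    {c : m → ℝ} (hc : c i₀ ≠ 0) {Λ : ℝ} (hΛ : lam i₀ < Λ) : secular lam c Λ < 0 := by
  rw [secular, ← add_sum_erase _ _ (mem_univ i₀)]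
  have hrest_nonpos : ∑ k ∈ univ.erase i₀, c k ^ 2 / (lam k - Λ) ≤ 0 :=
    sum_nonpos fun k hk =>
      div_nonpos_of_nonneg_of_nonpos (sq_nonneg _) (by linarith [hrest k (ne_of_mem_erase hk)])
  have hi₀_neg : c i₀ ^ 2 / (lam i₀ - Λ) < 0 :=
    div_neg_of_pos_of_neg (by positivity) (by linarith)
  linarith

theorem exists_secular_eq_zero (hpos : 0 < lam i₀) (hrest : ∀ k, k ≠ i₀ → lam k < 0)
    {c : m → ℝ} (hc : c i₀ ≠ 0) (h0 : secular lam c 0 < 0) :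
    ∃ Λ ∈ Set.Ioo 0 (lam i₀), secular lam c Λ = 0 := by
  set R := ∑ k ∈ univ.erase i₀, c k ^ 2 / lam k
  have hc₀ : 0 < c i₀ ^ 2 := by positivity
  have hR : c i₀ ^ 2 / lam i₀ < -R := by linarith [secular_zero_eq (i₀ := i₀) (lam := lam) c]
  -- at distance `δ` from the pole the `i₀` term equals `-2R`, which beats the rest of the sum
  set δ := c i₀ ^ 2 / (-R) / 2 with hδ_def
  have hnegR : 0 < -R := (div_pos hc₀ hpos).trans hR
  have hδ : 0 < δ := by positivity
  have hδlt : δ < lam i₀ := by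
    have : c i₀ ^ 2 / (-R) < lam i₀ := (div_lt_iff₀ hnegR).mpr (by
      rwa [div_lt_iff₀ hpos, mul_comm] at hR)
    linarith
  have hb : 0 < secular lam c (lam i₀ - δ) := by
    have hterm : c i₀ ^ 2 / (lam i₀ - (lam i₀ - δ)) = 2 * -R := by
      rw [sub_sub_cancel, hδ_def]
      field_simp
    linarith [le_secular hrest c (Λ := lam i₀ - δ) (by linarith)]
  have hcont : ContinuousOn (secular lam c) (Set.Icc 0 (lam i₀ - δ)) :=
    continuousOn_secular c fun Λ hΛ k => by
      by_cases hk : k = i₀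
      · subst hk; linarith [hΛ.2]
      · linarith [hrest k hk, hΛ.1]
  obtain ⟨Λ, hΛ, hQΛ⟩ := intermediate_value_Ioo (by linarith) hcont ⟨h0, hb⟩
  exact ⟨Λ, ⟨hΛ.1, by linarith [hΛ.2]⟩, hQΛ⟩

end Secular

section ConstrainedOperator

variable {m : Type*} [Fintype m] {ψ : m → m → ℝ} {L : Matrix m m ℝ}
  {lam : m → ℝ} {u : m → ℝ}

/-- In eigen-coordinates, `(L - Λ)⁻¹ u`. -/
noncomputable def resolventVec (ψ : m → m → ℝ) (lam u : m → ℝ) (Λ : ℝ) : m → ℝ :=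
  ∑ k, ((ψ k ⬝ᵥ u) / (lam k - Λ)) • ψ k

theorem resolventVec_dotProduct (ψ : m → m → ℝ) (lam u : m → ℝ) (Λ : ℝ) :
    resolventVec ψ lam u Λ ⬝ᵥ u = secular lam (ψ · ⬝ᵥ u) Λ := by
  rw [resolventVec, sum_smul_dotProduct, secular]
  exact sum_congr rfl fun k _ => by ring

theorem sub_mul_dotProduct_of_constrained_eigen (hL : L.IsSymm)
    (heig : ∀ k, L *ᵥ ψ k = lam k • ψ k) {μ Λ : ℝ} {Ψ : m → ℝ}
    (h : L *ᵥ Ψ - μ • u = Λ • Ψ) (j : m) :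
    (lam j - Λ) * (ψ j ⬝ᵥ Ψ) = μ * (ψ j ⬝ᵥ u) := by
  have hj := congrArg (ψ j ⬝ᵥ ·) h
  simp only [dotProduct_sub, dotProduct_smul, smul_eq_mul,
    dotProduct_mulVec_of_eigen hL heig] at hj
  linarith

variable [DecidableEq m]

theorem mulVec_resolventVec_sub (hψ : ∀ j k, ψ j ⬝ᵥ ψ k = if j = k then 1 else 0)
    (heig : ∀ k, L *ᵥ ψ k = lam k • ψ k) {Λ : ℝ} (hΛ : ∀ k, lam k ≠ Λ) :
    L *ᵥ resolventVec ψ lam u Λ - Λ • resolventVec ψ lam u Λ = u := by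
  rw [resolventVec, mulVec_sum_smul_of_eigen heig, smul_sum, ← sum_sub_distrib]
  conv_rhs => rw [← sum_dotProduct_smul_of_orthonormal hψ u]
  refine sum_congr rfl fun k _ => ?_
  have := sub_ne_zero.mpr (hΛ k)
  rw [smul_smul, ← sub_smul]
  congr 1
  field_simp

theorem inv_mulVec_dotProduct_eq_secular_zero
    (hψ : ∀ j k, ψ j ⬝ᵥ ψ k = if j = k then 1 else 0)
    (heig : ∀ k, L *ᵥ ψ k = lam k • ψ k) (hdet : IsUnit L.det) (hlam : ∀ k, lam k ≠ 0) :
    (L⁻¹ *ᵥ u) ⬝ᵥ u = secular lam (ψ · ⬝ᵥ u) 0 := by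
  have hsolve : L *ᵥ resolventVec ψ lam u 0 = u := by
    simpa using mulVec_resolventVec_sub (u := u) hψ heig hlam
  have hinv : L⁻¹ *ᵥ u = resolventVec ψ lam u 0 :=
    (congrArg (L⁻¹ *ᵥ ·) hsolve).symm.trans (by rw [mulVec_mulVec, nonsing_inv_mul _ hdet,
      one_mulVec])
  rw [hinv, resolventVec_dotProduct]

theorem eq_smul_resolventVec (hψ : ∀ j k, ψ j ⬝ᵥ ψ k = if j = k then 1 else 0)
    {μ Λ : ℝ} {Ψ : m → ℝ} (hcoord : ∀ j, (lam j - Λ) * (ψ j ⬝ᵥ Ψ) = μ * (ψ j ⬝ᵥ u))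
    (hΛ : ∀ k, lam k ≠ Λ) : Ψ = μ • resolventVec ψ lam u Λ := by
  conv_lhs => rw [← sum_dotProduct_smul_of_orthonormal hψ Ψ]
  rw [resolventVec, smul_sum]
  refine sum_congr rfl fun k _ => ?_
  have := sub_ne_zero.mpr (hΛ k)
  rw [smul_smul]
  congr 1
  field_simp
  linarith [hcoord k]

variable {i₀ : m}

theorem constrained_eigenvalue_neg (hL : L.IsSymm)
    (hψ : ∀ j k, ψ j ⬝ᵥ ψ k = if j = k then 1 else 0)
    (heig : ∀ k, L *ᵥ ψ k = lam k • ψ k) (hpos : 0 < lam i₀)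
    (hrest : ∀ k, k ≠ i₀ → lam k < 0) (hc : ψ i₀ ⬝ᵥ u ≠ 0)
    (hQ : 0 < secular lam (ψ · ⬝ᵥ u) 0) {μ Λ : ℝ} {Ψ : m → ℝ} (hΨ : Ψ ≠ 0)
    (horth : Ψ ⬝ᵥ u = 0) (h : L *ᵥ Ψ - μ • u = Λ • Ψ) : Λ < 0 := by
  by_contra! hΛ
  have hcoord := sub_mul_dotProduct_of_constrained_eigen hL heig h
  have hrestΛ : ∀ k, k ≠ i₀ → lam k - Λ ≠ 0 := fun k hk => by linarith [hrest k hk]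
  by_cases hμ : μ = 0
  · have hoff : ∀ k, k ≠ i₀ → ψ k ⬝ᵥ Ψ = 0 := fun k hk =>
      (mul_eq_zero.mp ((hcoord k).trans (by rw [hμ, zero_mul]))).resolve_left (hrestΛ k hk)
    have hline : Ψ = (ψ i₀ ⬝ᵥ Ψ) • ψ i₀ := by
      conv_lhs => rw [← sum_dotProduct_smul_of_orthonormal hψ Ψ]
      exact sum_eq_single i₀ (fun k _ hk => by rw [hoff k hk, zero_smul])
        (fun h => absurd (mem_univ i₀) h)
    have hi₀ : ψ i₀ ⬝ᵥ Ψ = 0 := by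
      rw [hline, smul_dotProduct, smul_eq_mul] at horth
      exact (mul_eq_zero.mp horth).resolve_right hc
    exact hΨ (by rw [hline, hi₀, zero_smul])
  · have hi₀ : lam i₀ ≠ Λ := fun heq => by
      have := hcoord i₀
      rw [heq, sub_self, zero_mul] at this
      exact hc ((mul_eq_zero.mp this.symm).resolve_left hμ)
    have hall : ∀ k, lam k ≠ Λ := fun k => by
      by_cases hk : k = i₀
      · rwa [hk]
      · exact sub_ne_zero.mp (hrestΛ k hk)
    have hroot : secular lam (ψ · ⬝ᵥ u) Λ = 0 := by
      rw [eq_smul_resolventVec hψ hcoord hall, smul_dotProduct, resolventVec_dotProduct,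
        smul_eq_mul] at horth
      exact (mul_eq_zero.mp horth).resolve_left hμ
    rcases hi₀.lt_or_gt with hlt | hgt
    · linarith [secular_neg_of_gt hpos hrest (c := (ψ · ⬝ᵥ u)) hc hlt]
    · linarith [secular_zero_le hrest (ψ · ⬝ᵥ u) hΛ hgt]

theorem exists_constrained_eigenvalue_pos
    (hψ : ∀ j k, ψ j ⬝ᵥ ψ k = if j = k then 1 else 0)
    (heig : ∀ k, L *ᵥ ψ k = lam k • ψ k) (hpos : 0 < lam i₀)
    (hrest : ∀ k, k ≠ i₀ → lam k < 0) (hc : ψ i₀ ⬝ᵥ u ≠ 0)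
    (hQ : secular lam (ψ · ⬝ᵥ u) 0 < 0) :
    ∃ (Λ : ℝ) (Ψ : m → ℝ), 0 < Λ ∧ Ψ ≠ 0 ∧ Ψ ⬝ᵥ u = 0 ∧
      L *ᵥ Ψ - (((L *ᵥ Ψ) ⬝ᵥ u) / (u ⬝ᵥ u)) • u = Λ • Ψ := by
  obtain ⟨Λ, ⟨hΛ, hΛi₀⟩, hroot⟩ := exists_secular_eq_zero hpos hrest (c := (ψ · ⬝ᵥ u)) hc hQ
  have hall : ∀ k, lam k ≠ Λ := fun k => by
    by_cases hk : k = i₀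
    · subst hk; exact hΛi₀.ne'
    · linarith [hrest k hk]
  set Ψ := resolventVec ψ lam u Λ
  have horth : Ψ ⬝ᵥ u = 0 := (resolventVec_dotProduct ψ lam u Λ).trans hroot
  have hLΨ : L *ᵥ Ψ = Λ • Ψ + u := sub_eq_iff_eq_add'.mp (mulVec_resolventVec_sub hψ heig hall)
  have hu : u ⬝ᵥ u ≠ 0 := fun h => hc (by rw [dotProduct_self_eq_zero.mp h, dotProduct_zero])
  refine ⟨Λ, Ψ, hΛ, fun h => ?_, horth, ?_⟩
  · have hi₀ : ψ i₀ ⬝ᵥ Ψ = (ψ i₀ ⬝ᵥ u) / (lam i₀ - Λ) :=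
      dotProduct_sum_smul_of_orthonormal hψ _ i₀
    rw [h, dotProduct_zero] at hi₀
    exact div_ne_zero hc (sub_ne_zero.mpr (hall i₀)) hi₀.symm
  · rw [hLΨ, add_dotProduct, smul_dotProduct, horth, smul_zero, zero_add, div_self hu,
      one_smul, add_sub_cancel_right]

end ConstrainedOperator

theorem stmt6_general {n : ℕ} (hn : 0 < n) (L₁h : Matrix (Fin n) (Fin n) ℝ)
    (hL : L₁h.IsSymm) (hLinv : IsUnit L₁h.det)
    (uh : Fin n → ℝ)
    (lam : Fin n → ℝ) (ψ : Fin n → (Fin n → ℝ))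
    (heig : ∀ k, L₁h *ᵥ ψ k = lam k • ψ k)
    (horthonormal : ∀ j k, ψ j ⬝ᵥ ψ k = if j = k then 1 else 0)
    (hpos : 0 < lam ⟨0, hn⟩) (hrest : ∀ k, k ≠ ⟨0, hn⟩ → lam k < 0)
    (hcoef : ψ ⟨0, hn⟩ ⬝ᵥ uh ≠ 0) :
    (0 < (L₁h⁻¹ *ᵥ uh) ⬝ᵥ uh →
      ∀ (Λ : ℝ) (Ψ : Fin n → ℝ), Ψ ≠ 0 → Ψ ⬝ᵥ uh = 0 →
        L₁h *ᵥ Ψ - (((L₁h *ᵥ Ψ) ⬝ᵥ uh) / (uh ⬝ᵥ uh)) • uh = Λ • Ψ → Λ < 0) ∧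
    ((L₁h⁻¹ *ᵥ uh) ⬝ᵥ uh < 0 →
      ∃ (Λ : ℝ) (Ψ : Fin n → ℝ), 0 < Λ ∧ Ψ ≠ 0 ∧ Ψ ⬝ᵥ uh = 0 ∧
        L₁h *ᵥ Ψ - (((L₁h *ᵥ Ψ) ⬝ᵥ uh) / (uh ⬝ᵥ uh)) • uh = Λ • Ψ) := by
  have hlam : ∀ k, lam k ≠ 0 := fun k => by
    by_cases hk : k = ⟨0, hn⟩
    · exact hk ▸ hpos.ne'
    · exact (hrest k hk).ne
  rw [inv_mulVec_dotProduct_eq_secular_zero horthonormal heig hLinv hlam]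
  exact ⟨fun hQ _ _ hΨ horth h =>
      constrained_eigenvalue_neg hL horthonormal heig hpos hrest hcoef hQ hΨ horth h,
    exists_constrained_eigenvalue_pos horthonormal heig hpos hrest hcoef⟩

/-- Let `L̂₁` be symmetric and invertible, with an orthonormal
eigenbasis `ψ k` (eigenvalues `lam k`) having exactly one positive eigenvalue
(index `0`), whose eigenvector satisfies `⟨ψ 0, û⟩ ≠ 0`. If `⟨L̂₁⁻¹û, û⟩ > 0`
then every eigenvalue of the constrained operator `𝓛̂` on `û^⊥` is negative;
if `⟨L̂₁⁻¹û, û⟩ < 0` then `𝓛̂` has a positive eigenvalue on `û^⊥`. -/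
theorem stmt6 {n : ℕ} (hn : 0 < n) (L₁h : Matrix (Fin n) (Fin n) ℝ)
    (hL : L₁h.IsSymm) (hLinv : IsUnit L₁h.det)
    (uh : Fin n → ℝ) (huh : uh ≠ 0)
    (lam : Fin n → ℝ) (ψ : Fin n → (Fin n → ℝ))
    (heig : ∀ k, L₁h *ᵥ ψ k = lam k • ψ k)
    (horthonormal : ∀ j k, ψ j ⬝ᵥ ψ k = if j = k then 1 else 0)
    (hpos : 0 < lam ⟨0, hn⟩) (hrest : ∀ k, k ≠ ⟨0, hn⟩ → lam k < 0)
    (hcoef : ψ ⟨0, hn⟩ ⬝ᵥ uh ≠ 0) :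
    (0 < (L₁h⁻¹ *ᵥ uh) ⬝ᵥ uh →
      ∀ (Λ : ℝ) (Ψ : Fin n → ℝ), Ψ ≠ 0 → Ψ ⬝ᵥ uh = 0 →
        L₁h *ᵥ Ψ - (((L₁h *ᵥ Ψ) ⬝ᵥ uh) / (uh ⬝ᵥ uh)) • uh = Λ • Ψ → Λ < 0) ∧
    ((L₁h⁻¹ *ᵥ uh) ⬝ᵥ uh < 0 →
      ∃ (Λ : ℝ) (Ψ : Fin n → ℝ), 0 < Λ ∧ Ψ ≠ 0 ∧ Ψ ⬝ᵥ uh = 0 ∧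
        L₁h *ᵥ Ψ - (((L₁h *ᵥ Ψ) ⬝ᵥ uh) / (uh ⬝ᵥ uh)) • uh = Λ • Ψ) :=
  stmt6_general hn L₁h hL hLinv uh lam ψ heig horthonormal hpos hrest hcoef
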